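/- arXiv:math/0503399 — 2 statements merged into one kernel-verified Lean document; each statement's English description precedes it below -/
import Mathlib

section
/- Let D be a finite family of sets equipped with a type function with values in {0,…,n} satisfying: the intersection of any two members of types r₁ and r₂ is a finite union of members of type at most min(r₁,r₂), and the intersection of two distinct members of the same type r is a finite union of members of type strictly less than r. Suppose X = A ∪ (⋃_j P_{λ_j}) = A ∪ (⋃_l Q_{ν_l}) are two reduced decompositions of a set X, where A has type r and all P_{λ_j}, Q_{ν_l} have type at most r, each containing a point not lying in any other member of its decomposition besides possibly A. If additionally every member of D of type r has a point (an 'interior point') not contained in any member of D of type at most r other than itself, and membership of an interior point of one member in another member of type ≤ its own forces containment, then ⋃_j P_{λ_j} = ⋃_l Q_{ν_l}. -/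
/-!
Every member `B` of one decomposition has an interior point, which lies in `A` or in a member
`C` of the other decomposition; membership of an interior point forces `B ⊆ A` or `B ⊆ C`, and
reducedness excludes `B ⊆ A`. Hence each union is contained in the other.
-/

section InteriorPoints

variable {X : Type*} {D S : Set (Set X)} {intD : Set X → Set X}

theorem exists_superset_mem_of_subset_sUnion (hint_sub : ∀ Q ∈ D, intD Q ⊆ Q)
    (hint_ne : ∀ Q ∈ D, (intD Q).Nonempty)
    (hint_forces : ∀ Q ∈ D, ∀ R ∈ D, (intD Q ∩ R).Nonempty → Q ⊆ R)
    {B : Set X} (hB : B ∈ D) (hS : S ⊆ D) (hBS : B ⊆ ⋃₀ S) : ∃ C ∈ S, B ⊆ C := by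
  obtain ⟨x, hx⟩ := hint_ne B hB
  obtain ⟨C, hCS, hxC⟩ := hBS (hint_sub B hB hx)
  exact ⟨C, hCS, hint_forces B hB C (hS hCS) ⟨x, hx, hxC⟩⟩

theorem sUnion_subset_sUnion_of_union_subset (hint_sub : ∀ Q ∈ D, intD Q ⊆ Q)
    (hint_ne : ∀ Q ∈ D, (intD Q).Nonempty)
    (hint_forces : ∀ Q ∈ D, ∀ R ∈ D, (intD Q ∩ R).Nonempty → Q ⊆ R)
    {A : Set X} (hA : A ∈ D) {P : Set (Set X)} (hP : P ⊆ D) (hS : S ⊆ D)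
    (hPA : ∀ B ∈ P, ¬ B ⊆ A) (hPS : A ∪ ⋃₀ P ⊆ A ∪ ⋃₀ S) : ⋃₀ P ⊆ ⋃₀ S := by
  refine Set.sUnion_subset fun B hBP => ?_
  have hB_sub : B ⊆ ⋃₀ insert A S := by
    rw [Set.sUnion_insert]
    exact Set.subset_sUnion_of_mem hBP |>.trans Set.subset_union_right |>.trans hPS
  obtain ⟨C, hC, hBC⟩ := exists_superset_mem_of_subset_sUnion hint_sub hint_ne hint_forces
    (hP hBP) (Set.insert_subset hA hS) hB_sub
  rcases hC with rfl | hCS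
  · exact absurd hBC (hPA B hBP)
  · exact hBC.trans (Set.subset_sUnion_of_mem hCS)

end InteriorPoints

theorem reduced_decompositions_union_eq_general
    {X : Type*} (D : Finset (Set X))
    (intD : Set X → Set X)
    (hint_sub : ∀ Q ∈ D, intD Q ⊆ Q)
    -- every member (in particular of type r) has an interior point
    (hint_ne : ∀ Q ∈ D, (intD Q).Nonempty)
    -- membership of an interior point of one member in another forces containment
    (hint_forces : ∀ Q ∈ D, ∀ R ∈ D, (intD Q ∩ R).Nonempty → Q ⊆ R)
    (A : Set X) (hA : A ∈ D)
    (P Q : Finset (Set X)) (hP : P ⊆ D) (hQ : Q ⊆ D)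
    -- reducedness of the two decompositions
    (hPredA : ∀ B ∈ P, ¬ B ⊆ A ∧ ¬ A ⊆ B)
    (hQredA : ∀ B ∈ Q, ¬ B ⊆ A ∧ ¬ A ⊆ B)
    (hEq : A ∪ ⋃₀ ↑P = A ∪ ⋃₀ ↑Q) :
    ⋃₀ (↑P : Set (Set X)) = ⋃₀ (↑Q : Set (Set X)) := by
  have hP' : (P : Set (Set X)) ⊆ D := Finset.coe_subset.mpr hP
  have hQ' : (Q : Set (Set X)) ⊆ D := Finset.coe_subset.mpr hQ
  exact (sUnion_subset_sUnion_of_union_subset hint_sub hint_ne hint_forces hA hP' hQ'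
      (fun B hB => (hPredA B hB).1) hEq.le).antisymm
    (sUnion_subset_sUnion_of_union_subset hint_sub hint_ne hint_forces hA hQ' hP'
      (fun B hB => (hQredA B hB).1) hEq.ge)

/-- Lemma "poly-20" (abstracted): if
`X = A ∪ ⋃ P = A ∪ ⋃ Q` are two reduced decompositions, with `A` of type `r` and all members
of `P`, `Q` of type at most `r`, then `⋃ P = ⋃ Q`. -/
theorem reduced_decompositions_union_eq
    {X : Type*} (n : ℕ) (D : Finset (Set X))
    (type : Set X → ℕ) (htype : ∀ Q ∈ D, type Q ≤ n)
    (intD : Set X → Set X)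
    (hint_sub : ∀ Q ∈ D, intD Q ⊆ Q)
    -- every member (in particular of type r) has an interior point
    (hint_ne : ∀ Q ∈ D, (intD Q).Nonempty)
    -- membership of an interior point of one member in another forces containment
    (hint_forces : ∀ Q ∈ D, ∀ R ∈ D, (intD Q ∩ R).Nonempty → Q ⊆ R)
    -- intersection axioms of the family with types
    (h1 : ∀ Q ∈ D, ∀ R ∈ D, ∃ s : Finset (Set X), s ⊆ D ∧
      (∀ B ∈ s, type B ≤ min (type Q) (type R)) ∧ Q ∩ R = ⋃₀ ↑s)
    (h2 : ∀ Q ∈ D, ∀ R ∈ D, Q ≠ R → type Q = type R →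
      ∃ s : Finset (Set X), s ⊆ D ∧ (∀ B ∈ s, type B < type Q) ∧ Q ∩ R = ⋃₀ ↑s)
    (r : ℕ) (A : Set X) (hA : A ∈ D) (hAr : type A = r)
    (P Q : Finset (Set X)) (hP : P ⊆ D) (hQ : Q ⊆ D)
    (hPr : ∀ B ∈ P, type B ≤ r) (hQr : ∀ B ∈ Q, type B ≤ r)
    -- reducedness of the two decompositions
    (hPredA : ∀ B ∈ P, ¬ B ⊆ A ∧ ¬ A ⊆ B)
    (hPpair : ∀ B ∈ P, ∀ C ∈ P, B ≠ C → ¬ B ⊆ C)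
    (hQredA : ∀ B ∈ Q, ¬ B ⊆ A ∧ ¬ A ⊆ B)
    (hQpair : ∀ B ∈ Q, ∀ C ∈ Q, B ≠ C → ¬ B ⊆ C)
    -- each member contains a point lying in no other member of its decomposition besides possibly A
    (hPpt : ∀ B ∈ P, ∃ x ∈ B, ∀ C ∈ P, C ≠ B → x ∉ C)
    (hQpt : ∀ B ∈ Q, ∃ x ∈ B, ∀ C ∈ Q, C ≠ B → x ∉ C)
    (hEq : A ∪ ⋃₀ ↑P = A ∪ ⋃₀ ↑Q) :
    ⋃₀ (↑P : Set (Set X)) = ⋃₀ (↑Q : Set (Set X)) :=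
  reduced_decompositions_union_eq_general D intD hint_sub hint_ne hint_forces A hA P Q hP hQ hPredA
    hQredA hEq
end

section
/- Under the hypotheses of the preceding abstraction of a subdivision (D a finite family of subsets of P, each Q ∈ D with a distinguished nonempty subset int(Q) ⊆ Q such that P = ⋃ int(Q) and int(Q) ∩ R ≠ ∅ implies Q ⊆ R), and assuming additionally a dimension function dim : D → ℕ with the property that Q ⊆ R and Q ≠ R implies dim Q < dim R: every set X expressible as a finite union of elements of D admits a unique reduced decomposition, i.e. a presentation X = ⋃_{j=1}^s P_{λ_j} with distinct P_{λ_j} ∈ D such that no P_{λ_i} is contained in P_{λ_j} for i ≠ j. -/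
/-!
Existence needs no geometry: the inclusion-maximal members of any finite family of sets are an
antichain with the same union. Uniqueness is where the interiors enter. If a cell `B` lies in a
union of cells, pick a point of `int B`; it lies in one of those cells `C`, which forces
`B ⊆ C`. Applied back and forth to two reduced decompositions of the same set, this gives
`B ⊆ C ⊆ B'` with `B, B'` in the first one, so `B = B' = C` by reducedness.
-/

open Finset

namespace Finset

variable {α : Type*} [PartialOrder α]

theorem isAntichain_filter_maximal (s : Finset α) [DecidablePred (Maximal (· ∈ s))] :
    IsAntichain (· ≤ ·) (↑(s.filter (Maximal (· ∈ s))) : Set α) :=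
  (setOfPred_maximal_antichain (· ∈ s)).subset fun _ hb => (mem_filter.mp hb).2

theorem exists_mem_filter_maximal_ge (s : Finset α) [DecidablePred (Maximal (· ∈ s))]
    {a : α} (ha : a ∈ s) : ∃ b ∈ s.filter (Maximal (· ∈ s)), a ≤ b := by
  obtain ⟨b, hab, hb⟩ := s.exists_le_maximal ha
  exact ⟨b, mem_filter.mpr ⟨hb.1, hb⟩, hab⟩

theorem sUnion_filter_maximal {P : Type*} (s : Finset (Set P))
    [DecidablePred (Maximal (· ∈ s))] :
    ⋃₀ (↑(s.filter (Maximal (· ∈ s))) : Set (Set P)) = ⋃₀ ↑s := by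
  refine subset_antisymm (Set.sUnion_subset_sUnion (coe_subset.mpr (filter_subset _ _))) ?_
  rintro x ⟨A, hA, hxA⟩
  obtain ⟨B, hB, hAB⟩ := s.exists_mem_filter_maximal_ge hA
  exact ⟨B, hB, hAB hxA⟩

end Finset

section Subdivision

variable {P : Type*}

theorem exists_superset_of_subset_sUnion {D : Finset (Set P)} {int : Set P → Set P}
    (hsub : ∀ Q ∈ D, int Q ⊆ Q) (hne : ∀ Q ∈ D, (int Q).Nonempty)
    (hforce : ∀ Q ∈ D, ∀ R ∈ D, (int Q ∩ R).Nonempty → Q ⊆ R)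
    {B : Set P} (hB : B ∈ D) {t : Finset (Set P)} (htD : t ⊆ D) (hBt : B ⊆ ⋃₀ ↑t) :
    ∃ C ∈ t, B ⊆ C := by
  obtain ⟨x, hx⟩ := hne B hB
  obtain ⟨C, hC, hxC⟩ := hBt (hsub B hB hx)
  exact ⟨C, hC, hforce B hB C (htD hC) ⟨x, hx, hxC⟩⟩

theorem subset_of_sUnion_eq_of_isAntichain {D : Finset (Set P)} {int : Set P → Set P}
    (hsub : ∀ Q ∈ D, int Q ⊆ Q) (hne : ∀ Q ∈ D, (int Q).Nonempty)
    (hforce : ∀ Q ∈ D, ∀ R ∈ D, (int Q ∩ R).Nonempty → Q ⊆ R)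
    {a b : Finset (Set P)} (haD : a ⊆ D) (hbD : b ⊆ D) (hab : ⋃₀ (↑a : Set (Set P)) = ⋃₀ ↑b)
    (ha : IsAntichain (· ⊆ ·) (↑a : Set (Set P))) : a ⊆ b := by
  intro B hB
  obtain ⟨C, hC, hBC⟩ := exists_superset_of_subset_sUnion hsub hne hforce (haD hB) hbD
    (hab ▸ Set.subset_sUnion_of_mem hB)
  obtain ⟨B', hB', hCB'⟩ := exists_superset_of_subset_sUnion hsub hne hforce (hbD hC) haD
    (hab ▸ Set.subset_sUnion_of_mem hC)
  have hBB' : B = B' := ha.eq hB hB' (hBC.trans hCB')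
  rwa [subset_antisymm hBC (hBB' ▸ hCB')]

end Subdivision

theorem subdivision_unique_reduced_decomposition_general
    {P : Type*} (D : Finset (Set P)) (int : Set P → Set P)
    (hsub : ∀ Q ∈ D, int Q ⊆ Q)
    (hne : ∀ Q ∈ D, (int Q).Nonempty)
    (hforce : ∀ Q ∈ D, ∀ R ∈ D, (int Q ∩ R).Nonempty → Q ⊆ R) :
    ∀ X : Set P, (∃ s ⊆ D, X = ⋃₀ ↑s) →
      ∃! t : Finset (Set P), t ⊆ D ∧ ⋃₀ (↑t : Set (Set P)) = X ∧
        ∀ B ∈ t, ∀ C ∈ t, B ≠ C → ¬ B ⊆ C := by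
  rintro X ⟨s, hsD, rfl⟩
  classical
  have hmaxD : s.filter (Maximal (· ∈ s)) ⊆ D := (filter_subset _ _).trans hsD
  refine ⟨s.filter (Maximal (· ∈ s)),
    ⟨hmaxD, s.sUnion_filter_maximal, s.isAntichain_filter_maximal⟩, ?_⟩
  rintro t ⟨htD, htX, ht⟩
  have hunion := htX.trans (s.sUnion_filter_maximal).symm
  exact subset_antisymm (subset_of_sUnion_eq_of_isAntichain hsub hne hforce htD hmaxD hunion ht)
    (subset_of_sUnion_eq_of_isAntichain hsub hne hforce hmaxD htD hunion.symm
      s.isAntichain_filter_maximal)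

/-- Corollary "poly-21" (abstracted): relative to a subdivision-like family `D` with a
dimension function strictly increasing along proper inclusions, every set expressible as a
finite union of elements of `D` admits a unique reduced decomposition. -/
theorem subdivision_unique_reduced_decomposition
    {P : Type*} (D : Finset (Set P)) (int : Set P → Set P)
    (hsub : ∀ Q ∈ D, int Q ⊆ Q)
    (hne : ∀ Q ∈ D, (int Q).Nonempty)
    (hcover : (⋃ Q ∈ D, int Q) = Set.univ)
    (hforce : ∀ Q ∈ D, ∀ R ∈ D, (int Q ∩ R).Nonempty → Q ⊆ R)
    (dim : Set P → ℕ)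
    (hdim : ∀ Q ∈ D, ∀ R ∈ D, Q ⊆ R → Q ≠ R → dim Q < dim R) :
    ∀ X : Set P, (∃ s ⊆ D, X = ⋃₀ ↑s) →
      ∃! t : Finset (Set P), t ⊆ D ∧ ⋃₀ (↑t : Set (Set P)) = X ∧
        ∀ B ∈ t, ∀ C ∈ t, B ≠ C → ¬ B ⊆ C :=
  subdivision_unique_reduced_decomposition_general D int hsub hne hforce
end
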